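/- arXiv:2011.01737 — 6 statements merged into one kernel-verified Lean document; each statement's English description precedes it below -/
import Mathlib

section
/- Let A⁺, A⁻, B⁺, B⁻ be symmetric matrices with A⁻, B⁻ positive definite. Then ‖(A⁻)^{-1/2} A⁺ (A⁻)^{-1/2} - (B⁻)^{-1/2} B⁺ (B⁻)^{-1/2}‖ ≤ ‖(A⁻)^{-1}‖·‖A⁺‖·(‖I - (B⁻)^{-1/2}(A⁻)^{1/2}‖² + 2‖I - (B⁻)^{-1/2}(A⁻)^{1/2}‖) + ‖(B⁻)^{-1}‖·‖A⁺ - B⁺‖. -/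
/-!
Put `X = (A⁻)^{1/2}`, `Z = (B⁻)^{-1/2}`, `E = 1 - Z X` and `C = X⁻¹ A⁺ X⁻¹`. Then `Z X = 1 - E` and
`X Z = 1 - E*`, so `Z A⁺ Z = (1 - E) C (1 - E*)` and
`X⁻¹ A⁺ X⁻¹ - Z B⁺ Z = E C + C E* - E C E* + Z (A⁺ - B⁺) Z`.
Since `‖E*‖ = ‖E‖`, the first three terms have norm at most `‖C‖ (‖E‖² + 2‖E‖)`. For self-adjoint
`S` the C⋆-identity `‖S‖² = ‖S S‖` gives `‖S M S‖ ≤ ‖S S‖ ‖M‖`, which bounds `‖C‖` by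
`‖(A⁻)⁻¹‖ ‖A⁺‖` and the last term by `‖(B⁻)⁻¹‖ ‖A⁺ - B⁺‖`.
-/

open Matrix

/-- The square root of a positive semidefinite matrix, as `Matrix.PosSemidef.sqrt` was defined
in Mathlib of December 2024 (since removed). -/
noncomputable def Matrix.PosSemidef.sqrt {n : Type*} [Fintype n] [DecidableEq n]
    {A : Matrix n n ℝ} (hA : A.PosSemidef) : Matrix n n ℝ :=
  hA.1.eigenvectorUnitary.1 * diagonal ((↑) ∘ (√·) ∘ hA.1.eigenvalues) *
    (star hA.1.eigenvectorUnitary : Matrix n n ℝ)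

/-- The spectral (ℓ²-operator) norm of a square real matrix. -/
noncomputable def specNorm {n : ℕ} (A : Matrix (Fin n) (Fin n) ℝ) : ℝ :=
  ‖Matrix.toEuclideanCLM (𝕜 := ℝ) A‖

namespace Matrix.PosSemidef

variable {n : Type*} [Fintype n] [DecidableEq n] {A : Matrix n n ℝ}

theorem sqrt_isHermitian (hA : A.PosSemidef) : hA.sqrt.IsHermitian :=
  isHermitian_mul_mul_conjTranspose _ (isHermitian_diagonal _)

theorem sqrt_mul_self (hA : A.PosSemidef) : hA.sqrt * hA.sqrt = A := by
  have hU := mem_unitaryGroup_iff'.mp hA.1.eigenvectorUnitary.2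
  conv_rhs => rw [hA.1.spectral_theorem, Unitary.conjStarAlgAut_apply]
  simp only [sqrt, Matrix.mul_assoc]
  rw [← Matrix.mul_assoc (star _) _ _, hU, Matrix.one_mul, ← Matrix.mul_assoc (diagonal _),
    diagonal_mul_diagonal]
  congr 3
  ext i
  simp [Real.mul_self_sqrt (hA.eigenvalues_nonneg i)]

end Matrix.PosSemidef

theorem Matrix.PosDef.isUnit_sqrt {n : Type*} [Fintype n] [DecidableEq n] {A : Matrix n n ℝ}
    (hA : A.PosDef) : IsUnit hA.posSemidef.sqrt := by
  have h := hA.isUnit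
  rw [← hA.posSemidef.sqrt_mul_self] at h
  exact isUnit_of_mul_isUnit_left h

theorem Units.inv_conj_sub_conj_eq {R : Type*} [Ring R] (u : Rˣ) (a b z : R) :
    ↑u⁻¹ * a * ↑u⁻¹ - z * b * z =
      (1 - z * u) * (↑u⁻¹ * a * ↑u⁻¹) + ↑u⁻¹ * a * ↑u⁻¹ * (1 - u * z)
        - (1 - z * u) * (↑u⁻¹ * a * ↑u⁻¹) * (1 - u * z) + z * (a - b) * z := by
  simp only [sub_mul, mul_sub, one_mul, mul_one, mul_assoc, Units.mul_inv_cancel_left,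
    Units.inv_mul_cancel_left]
  abel

theorem IsSelfAdjoint.val_inv {R : Type*} [Monoid R] [StarMul R] {u : Rˣ}
    (hu : IsSelfAdjoint (u : R)) : IsSelfAdjoint (↑u⁻¹ : R) := by
  have hu' : IsSelfAdjoint u := Units.ext hu.star_eq
  simpa [IsSelfAdjoint, Units.coe_star] using congrArg Units.val hu'.inv

section CStarRing

variable {R : Type*} [NormedRing R] [StarRing R] [CStarRing R]

theorem IsSelfAdjoint.norm_mul_mul_self_le {s : R} (hs : IsSelfAdjoint s) (a : R) :
    ‖s * a * s‖ ≤ ‖s * s‖ * ‖a‖ :=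
  calc ‖s * a * s‖ ≤ ‖s‖ * ‖a‖ * ‖s‖ := norm_mul₃_le
    _ = ‖s * s‖ * ‖a‖ := by rw [hs.norm_mul_self]; ring

theorem norm_units_inv_conj_sub_conj_le {u : Rˣ} (hu : IsSelfAdjoint (u : R)) {z : R}
    (hz : IsSelfAdjoint z) (a b : R) :
    ‖↑u⁻¹ * a * ↑u⁻¹ - z * b * z‖ ≤
      ‖(↑u⁻¹ * ↑u⁻¹ : R)‖ * ‖a‖ * (‖1 - z * u‖ ^ 2 + 2 * ‖1 - z * u‖) + ‖z * z‖ * ‖a - b‖ := by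
  set c : R := ↑u⁻¹ * a * ↑u⁻¹
  set e : R := 1 - z * u
  set f : R := 1 - u * z
  have hf : ‖f‖ = ‖e‖ := by
    rw [← norm_star e]
    simp [e, f, hu.star_eq, hz.star_eq]
  have hc : ‖c‖ ≤ ‖(↑u⁻¹ * ↑u⁻¹ : R)‖ * ‖a‖ := hu.val_inv.norm_mul_mul_self_le a
  have hecf : ‖e * c + c * f - e * c * f‖ ≤ ‖c‖ * (‖e‖ ^ 2 + 2 * ‖e‖) :=
    calc _ ≤ ‖e * c‖ + ‖c * f‖ + ‖e * c * f‖ :=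
          (norm_sub_le _ _).trans (add_le_add_left (norm_add_le _ _) _)
      _ ≤ ‖e‖ * ‖c‖ + ‖c‖ * ‖f‖ + ‖e‖ * ‖c‖ * ‖f‖ := by
          gcongr
          exacts [norm_mul_le _ _, norm_mul_le _ _, norm_mul₃_le]
      _ = ‖c‖ * (‖e‖ ^ 2 + 2 * ‖e‖) := by rw [hf]; ring
  rw [Units.inv_conj_sub_conj_eq]
  calc _ ≤ ‖e * c + c * f - e * c * f‖ + ‖z * (a - b) * z‖ := norm_add_le _ _
    _ ≤ _ := by
        gcongr
        exacts [hecf.trans (by gcongr), hz.norm_mul_mul_self_le _]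

end CStarRing

-- `specNorm` is definitionally the norm of the C⋆-ring structure on matrices opened here.
open scoped Matrix.Norms.L2Operator in
theorem specNorm_inv_conj_sub_conj_le {n : ℕ} {X Z : Matrix (Fin n) (Fin n) ℝ}
    (hX : X.IsHermitian) (hXu : IsUnit X) (hZ : Z.IsHermitian) (a b : Matrix (Fin n) (Fin n) ℝ) :
    specNorm (X⁻¹ * a * X⁻¹ - Z * b * Z) ≤
      specNorm (X⁻¹ * X⁻¹) * specNorm a * (specNorm (1 - Z * X) ^ 2 + 2 * specNorm (1 - Z * X))
        + specNorm (Z * Z) * specNorm (a - b) := by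
  obtain ⟨u, rfl⟩ := hXu
  rw [← coe_units_inv]
  exact norm_units_inv_conj_sub_conj_le hX.isSelfAdjoint hZ.isSelfAdjoint a b

theorem congruence_perturbation_bound_one_general {n : ℕ}
    (Ap Am Bp Bm : Matrix (Fin n) (Fin n) ℝ)
    (hAm : Am.PosDef) (hBm : Bm.PosDef) :
    specNorm ((Matrix.PosSemidef.sqrt hAm.posSemidef)⁻¹ * Ap * (Matrix.PosSemidef.sqrt hAm.posSemidef)⁻¹
        - (Matrix.PosSemidef.sqrt hBm.posSemidef)⁻¹ * Bp * (Matrix.PosSemidef.sqrt hBm.posSemidef)⁻¹)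
      ≤ specNorm Am⁻¹ * specNorm Ap *
          (specNorm (1 - (Matrix.PosSemidef.sqrt hBm.posSemidef)⁻¹ * Matrix.PosSemidef.sqrt hAm.posSemidef) ^ 2
            + 2 * specNorm (1 - (Matrix.PosSemidef.sqrt hBm.posSemidef)⁻¹ * Matrix.PosSemidef.sqrt hAm.posSemidef))
        + specNorm Bm⁻¹ * specNorm (Ap - Bp) := by
  have h := specNorm_inv_conj_sub_conj_le hAm.posSemidef.sqrt_isHermitian hAm.isUnit_sqrt
    hBm.posSemidef.sqrt_isHermitian.inv Ap Bp
  rwa [← Matrix.mul_inv_rev, hAm.posSemidef.sqrt_mul_self, ← Matrix.mul_inv_rev,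
    hBm.posSemidef.sqrt_mul_self] at h

/-- First inequality of Proposition `normcmcpcm_cmecpecme`: for symmetric `A⁺, B⁺`
and positive definite `A⁻, B⁻`,
`‖(A⁻)^{-1/2} A⁺ (A⁻)^{-1/2} - (B⁻)^{-1/2} B⁺ (B⁻)^{-1/2}‖ ≤
  ‖(A⁻)^{-1}‖ ‖A⁺‖ (‖I - (B⁻)^{-1/2}(A⁻)^{1/2}‖² + 2‖I - (B⁻)^{-1/2}(A⁻)^{1/2}‖)
  + ‖(B⁻)^{-1}‖ ‖A⁺ - B⁺‖`. -/
theorem congruence_perturbation_bound_one {n : ℕ}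
    (Ap Am Bp Bm : Matrix (Fin n) (Fin n) ℝ)
    (hAp : Ap.IsSymm) (hBp : Bp.IsSymm) (hAm : Am.PosDef) (hBm : Bm.PosDef) :
    specNorm ((Matrix.PosSemidef.sqrt hAm.posSemidef)⁻¹ * Ap * (Matrix.PosSemidef.sqrt hAm.posSemidef)⁻¹
        - (Matrix.PosSemidef.sqrt hBm.posSemidef)⁻¹ * Bp * (Matrix.PosSemidef.sqrt hBm.posSemidef)⁻¹)
      ≤ specNorm Am⁻¹ * specNorm Ap *
          (specNorm (1 - (Matrix.PosSemidef.sqrt hBm.posSemidef)⁻¹ * Matrix.PosSemidef.sqrt hAm.posSemidef) ^ 2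
            + 2 * specNorm (1 - (Matrix.PosSemidef.sqrt hBm.posSemidef)⁻¹ * Matrix.PosSemidef.sqrt hAm.posSemidef))
        + specNorm Bm⁻¹ * specNorm (Ap - Bp) :=
  congruence_perturbation_bound_one_general Ap Am Bp Bm hAm hBm
end

section
/- Let A be a real symmetric n×n matrix with signed degrees d_j = Σ_{j'}|A_{jj'}|, and let γ⁺, γ⁻ ≥ 0 with γ = γ⁺ + γ⁻ > 0. Define A_γ = A + ((γ⁺−γ⁻)/n)·J (J the all-ones matrix), D̄_γ = diag(d_j + γ), and L_γ = I − D̄_γ^{-1/2} A_γ D̄_γ^{-1/2}. Then every eigenvalue of L_γ lies in [0, 2]. -/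
/-!
Conjugation by `D̄_γ^{1/2}` shows that `D̄_γ^{-1/2} A_γ D̄_γ^{-1/2}` has the same spectrum as
`D̄_γ^{-1} A_γ`. The absolute row sums of `A_γ` are at most `d_j + |γ⁺ - γ⁻| ≤ d_j + γ`, so those of
`D̄_γ^{-1} A_γ` are at most `1`, and Gershgorin's theorem puts its eigenvalues in `[-1, 1]`.
Hence the eigenvalues of `L_γ` lie in `[0, 2]`.
-/

open Matrix

lemma spectrum.units_mul_mul_self {R A : Type*} [CommSemiring R] [Ring A] [Algebra R A]
    (u : Aˣ) (a : A) : spectrum R (u * a * u) = spectrum R (u * u * a) := by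
  rw [← spectrum.units_conjugate' (u := u) (a := u * u * a)]
  simp [mul_assoc]

theorem Finset.sum_abs_add_const_le {ι : Type*} (s : Finset ι) (f : ι → ℝ) (c : ℝ) :
    ∑ j ∈ s, |f j + c| ≤ ∑ j ∈ s, |f j| + s.card * |c| := by
  calc ∑ j ∈ s, |f j + c| ≤ ∑ j ∈ s, (|f j| + |c|) := Finset.sum_le_sum fun j _ => abs_add_le _ _
    _ = ∑ j ∈ s, |f j| + s.card * |c| := by
        rw [Finset.sum_add_distrib, Finset.sum_const, nsmul_eq_mul]

namespace Matrix

variable {n : Type*} [Fintype n] [DecidableEq n]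

theorem norm_le_of_mem_spectrum_of_sum_norm_le {K : Type*} [NormedField K] {B : Matrix n n K}
    {r : ℝ} (hB : ∀ i, ∑ j, ‖B i j‖ ≤ r) {μ : K} (hμ : μ ∈ spectrum K B) : ‖μ‖ ≤ r := by
  rw [← spectrum_toLin', ← Module.End.hasEigenvalue_iff_mem_spectrum] at hμ
  obtain ⟨k, hk⟩ := eigenvalue_mem_ball hμ
  rw [Metric.mem_closedBall, dist_eq_norm] at hk
  calc ‖μ‖ ≤ ‖μ - B k k‖ + ‖B k k‖ := norm_le_norm_sub_add μ (B k k)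
    _ ≤ ∑ j ∈ Finset.univ.erase k, ‖B k j‖ + ‖B k k‖ := by gcongr
    _ = ∑ j, ‖B k j‖ := Finset.sum_erase_add _ _ (Finset.mem_univ k)
    _ ≤ r := hB k

theorem abs_le_one_of_mem_spectrum_diagonal_inv_sqrt_mul_mul {B : Matrix n n ℝ} {t : n → ℝ}
    (ht : ∀ i, 0 < t i) (hB : ∀ i, ∑ j, |B i j| ≤ t i) {μ : ℝ}
    (hμ : μ ∈ spectrum ℝ (diagonal (fun j => (√(t j))⁻¹) * B * diagonal (fun j => (√(t j))⁻¹))) :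
    |μ| ≤ 1 := by
  have hs : IsUnit (diagonal fun j => (√(t j))⁻¹) :=
    isUnit_diagonal.mpr (Pi.isUnit_iff.mpr fun j => by simp [(Real.sqrt_pos.mpr (ht j)).ne'])
  rw [← hs.unit_spec, spectrum.units_mul_mul_self, hs.unit_spec, diagonal_mul_diagonal] at hμ
  refine norm_le_of_mem_spectrum_of_sum_norm_le (fun i => ?_) hμ
  have hsq : (√(t i))⁻¹ * (√(t i))⁻¹ = (t i)⁻¹ := by
    rw [← mul_inv, Real.mul_self_sqrt (ht i).le]
  simp only [diagonal_mul, hsq, Real.norm_eq_abs, abs_mul, abs_inv, abs_of_pos (ht i),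
    ← Finset.mul_sum]
  exact inv_mul_le_one_of_le₀ (hB i) (ht i).le

end Matrix

theorem regularized_signed_laplacian_spectrum_in_Icc_general {n : ℕ}
    (A : Matrix (Fin n) (Fin n) ℝ)
    (d : Fin n → ℝ) (hd : ∀ j, d j = ∑ j', |A j j'|)
    (γp γm : ℝ) (hγp : 0 ≤ γp) (hγm : 0 ≤ γm) (hγ : 0 < γp + γm)
    (Aγ Lγ : Matrix (Fin n) (Fin n) ℝ)
    (hAγ : Aγ = A + ((γp - γm) / n) • (Matrix.of fun _ _ => (1 : ℝ)))
    (hLγ : Lγ = 1 - Matrix.diagonal (fun j => (Real.sqrt (d j + (γp + γm)))⁻¹) * Aγ *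
        Matrix.diagonal (fun j => (Real.sqrt (d j + (γp + γm)))⁻¹)) :
    spectrum ℝ Lγ ⊆ Set.Icc (0 : ℝ) 2 := by
  have hdeg : ∀ j, 0 < d j + (γp + γm) := fun j => by rw [hd j]; positivity
  have hrow : ∀ i, ∑ j, |Aγ i j| ≤ d i + (γp + γm) := fun i => by
    have hn : (n : ℝ) ≠ 0 := Nat.cast_ne_zero.mpr (Fin.pos i).ne'
    have hsub : |γp - γm| ≤ γp + γm := abs_sub_le_iff.mpr ⟨by linarith, by linarith⟩
    calc ∑ j, |Aγ i j| ≤ d i + n * |(γp - γm) / n| := by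
          simpa [hAγ, hd i] using Finset.univ.sum_abs_add_const_le (A i) ((γp - γm) / n)
      _ ≤ d i + (γp + γm) := by
          rwa [abs_div, Nat.abs_cast, mul_div_cancel₀ _ hn, add_le_add_iff_left]
  intro μ hμ
  rw [hLγ, ← map_one (algebraMap ℝ _), ← spectrum.singleton_sub_eq] at hμ
  obtain ⟨_, rfl, ν, hν, rfl⟩ := hμ
  have hν_bound := abs_le.mp (abs_le_one_of_mem_spectrum_diagonal_inv_sqrt_mul_mul hdeg hrow hν)
  constructor <;> linarith [hν_bound.1, hν_bound.2]

/-- The eigenvalues of the regularized symmetric Signed Laplacian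
`L_γ = I - D̄_γ^{-1/2} A_γ D̄_γ^{-1/2}`, where `A_γ = A + ((γ⁺-γ⁻)/n) J` and
`D̄_γ = diag(d_j + γ)` with `γ = γ⁺ + γ⁻ > 0`, lie in `[0, 2]`. -/
theorem regularized_signed_laplacian_spectrum_in_Icc {n : ℕ}
    (A : Matrix (Fin n) (Fin n) ℝ) (hA : A.IsSymm)
    (d : Fin n → ℝ) (hd : ∀ j, d j = ∑ j', |A j j'|)
    (γp γm : ℝ) (hγp : 0 ≤ γp) (hγm : 0 ≤ γm) (hγ : 0 < γp + γm)
    (Aγ Lγ : Matrix (Fin n) (Fin n) ℝ)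
    (hAγ : Aγ = A + ((γp - γm) / n) • (Matrix.of fun _ _ => (1 : ℝ)))
    (hLγ : Lγ = 1 - Matrix.diagonal (fun j => (Real.sqrt (d j + (γp + γm)))⁻¹) * Aγ *
        Matrix.diagonal (fun j => (Real.sqrt (d j + (γp + γm)))⁻¹)) :
    spectrum ℝ Lγ ⊆ Set.Icc (0 : ℝ) 2 :=
  regularized_signed_laplacian_spectrum_in_Icc_general A d hd γp γm hγp hγm hγ Aγ Lγ hAγ hLγ
end

section
/- Under the SSBM, the population symmetric Signed Laplacian L_sym := I − (E[D̄])^{-1/2} E[A] (E[D̄])^{-1/2} admits the decomposition L_sym = [Θ V⊥] · diag(C̄, ᾱ I_{n−k}) · [Θ V⊥]ᵀ, where ᾱ = 1 + (p/d̄)(1−2η), C̄ = ᾱ I_k − B̄ with B̄_{ii} = (n_i p/d̄)(1−2η), B̄_{ii'} = −(√(n_i n_{i'}) p/d̄)(1−2η) for i≠i', Θ is the normalized membership matrix, and V⊥ is any orthonormal basis of the orthogonal complement of the column span of Θ. -/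
/-!
With `d̄ = p(n-1)`, the `(j, j')` entry of `Θ B̄ Θᵀ` is `B̄_{c j, c j'} / √(n_{c j} n_{c j'})`,
which is `±p(1-2η)/d̄` according as `j, j'` share a cluster; hence
`Θ B̄ Θᵀ = (ᾱ - 1) I + d̄⁻¹ E[A]`, while `L_sym = I - d̄⁻¹ E[A]`. Since `[Θ V⊥]` is square with
orthonormal columns it is orthogonal, so `Θ Θᵀ + V⊥ V⊥ᵀ = I`, and
`Θ C̄ Θᵀ + ᾱ V⊥ V⊥ᵀ = ᾱ I - Θ B̄ Θᵀ = L_sym`.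
-/

open Matrix

namespace Matrix

variable {R m κ ν : Type*}

theorem card_le_card_of_mul_eq_one [CommRing R] [StrongRankCondition R] [Fintype m] [Fintype κ]
    [DecidableEq κ] {A : Matrix κ m R} {B : Matrix m κ R} (h : A * B = 1) :
    Fintype.card κ ≤ Fintype.card m :=
  calc Fintype.card κ = (A * B).rank := by rw [h, rank_one]
    _ ≤ B.rank := rank_mul_le_right A B
    _ ≤ Fintype.card m := rank_le_card_height B

theorem mul_transpose_add_mul_transpose_eq_one [CommRing R] [Fintype m] [DecidableEq m]
    [Fintype κ] [DecidableEq κ] [Fintype ν] [DecidableEq ν] (e : κ ⊕ ν ≃ m)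
    {Θ : Matrix m κ R} {V : Matrix m ν R}
    (hΘ : Θᵀ * Θ = 1) (hV : Vᵀ * V = 1) (hΘV : Θᵀ * V = 0) :
    Θ * Θᵀ + V * Vᵀ = 1 := by
  have hVΘ : Vᵀ * Θ = 0 := by simpa using congrArg transpose hΘV
  have : (fromCols Θ V)ᵀ * fromCols Θ V = 1 := by
    rw [transpose_fromCols, fromRows_mul_fromCols, hΘ, hV, hΘV, hVΘ, fromBlocks_one]
  rw [mul_eq_one_comm_of_equiv e, transpose_fromCols, fromCols_mul_fromRows] at this
  exact this

theorem mul_mul_transpose_apply_of_eq_ite [CommSemiring R] [Fintype κ] [DecidableEq κ]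
    {Θ : Matrix m κ R} {c : m → κ} {w : κ → R} (hΘ : ∀ j i, Θ j i = if c j = i then w i else 0)
    (M : Matrix κ κ R) (j j' : m) :
    (Θ * M * Θᵀ) j j' = w (c j) * M (c j) (c j') * w (c j') := by
  simp [mul_apply, hΘ]

theorem diagonal_const_mul_mul_diagonal_const [CommSemiring R] [Fintype m] [DecidableEq m] (a : R)
    (A : Matrix m m R) :
    diagonal (fun _ => a) * A * diagonal (fun _ => a) = (a * a) • A := by
  ext; simp [diagonal_mul, mul_diagonal]; ring

end Matrix

open Real in
theorem membership_mul_mul_transpose_eq {m κ : Type*} [Fintype κ] [DecidableEq κ] [DecidableEq m]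
    {c : m → κ} {size : κ → ℝ} (hsize : ∀ j, 0 < size (c j)) {q d : ℝ}
    {Θ : Matrix m κ ℝ} {A : Matrix m m ℝ} {B : Matrix κ κ ℝ}
    (hΘ : ∀ j i, Θ j i = if c j = i then 1 / √(size i) else 0)
    (hA : ∀ j j', A j j' = if j = j' then 0 else if c j = c j' then q else -q)
    (hB : ∀ i i', B i i' = if i = i' then size i * q / d else -(√(size i * size i') * q / d)) :
    Θ * B * Θᵀ = (q / d) • 1 + d⁻¹ • A := by
  ext j j'
  have hj := hsize j
  rw [mul_mul_transpose_apply_of_eq_ite hΘ, hB, Matrix.add_apply, Matrix.smul_apply,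
    Matrix.smul_apply, one_apply, hA]
  rcases eq_or_ne j j' with rfl | hjj
  · simp only [one_div, ↓reduceIte, smul_eq_mul, mul_one, mul_zero, add_zero]
    field_simp
    simp [sq_sqrt hj.le]
  · by_cases hcc : c j = c j'
    · simp only [one_div, ← hcc, ↓reduceIte, hjj, smul_eq_mul, mul_zero, zero_add]
      field_simp
      simp [sq_sqrt hj.le]
    · have hj' := hsize j'
      simp only [one_div, hcc, ↓reduceIte, sqrt_mul hj.le, mul_neg, neg_mul, hjj, smul_eq_mul,
        mul_zero, zero_add, neg_inj]
      field_simp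

theorem ssbm_population_laplacian_decomposition_general {n k : ℕ} (hn : 2 ≤ n)
    (c : Fin n → Fin k) (p η : ℝ)
    (hp : 0 < p)
    (nsize : Fin k → ℕ)
    (hnsize : ∀ i, nsize i = (Finset.univ.filter (fun j => c j = i)).card)
    (EA Lsym : Matrix (Fin n) (Fin n) ℝ)
    (Θ : Matrix (Fin n) (Fin k) ℝ) (Bbar Cbar : Matrix (Fin k) (Fin k) ℝ)
    (Vperp : Matrix (Fin n) (Fin (n - k)) ℝ) (abar : ℝ)
    (hEA : ∀ j j', EA j j' = if j = j' then 0
        else if c j = c j' then p * (1 - 2*η) else -(p * (1 - 2*η)))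
    (hΘ : ∀ j i, Θ j i = if c j = i then 1 / Real.sqrt (nsize i) else 0)
    (hΘorth : Θᵀ * Θ = 1)
    (hVorth : Vperpᵀ * Vperp = 1) (hΘV : Θᵀ * Vperp = 0)
    (hB : ∀ i i', Bbar i i' =
        if i = i' then (nsize i : ℝ) * p * (1 - 2*η) / (p * ((n : ℝ) - 1))
        else -(Real.sqrt ((nsize i : ℝ) * (nsize i' : ℝ)) * p * (1 - 2*η)
          / (p * ((n : ℝ) - 1))))
    (habar : abar = 1 + (p / (p * ((n : ℝ) - 1))) * (1 - 2*η))
    (hCbar : Cbar = abar • (1 : Matrix (Fin k) (Fin k) ℝ) - Bbar)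
    (hLsym : Lsym = 1 -
        Matrix.diagonal (fun _ : Fin n => (Real.sqrt (p * ((n : ℝ) - 1)))⁻¹) * EA *
        Matrix.diagonal (fun _ : Fin n => (Real.sqrt (p * ((n : ℝ) - 1)))⁻¹)) :
    Lsym = Θ * Cbar * Θᵀ + abar • (Vperp * Vperpᵀ) := by
  set d := p * ((n : ℝ) - 1)
  have hd : 0 ≤ d := mul_nonneg hp.le (sub_nonneg.2 (Nat.one_le_cast.2 (by omega)))
  have hsize : ∀ j, 0 < (nsize (c j) : ℝ) := fun j => by
    rw [hnsize, Nat.cast_pos, Finset.card_pos]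
    exact ⟨j, Finset.mem_filter.2 ⟨Finset.mem_univ j, rfl⟩⟩
  have hkey : Θ * Bbar * Θᵀ = (abar - 1) • 1 + d⁻¹ • EA := by
    rw [membership_mul_mul_transpose_eq (size := fun i => (nsize i : ℝ)) (d := d) hsize hΘ hEA
      fun i i' => by rw [hB]; simp only [mul_assoc], habar]
    congr 2
    ring
  have hcomplete : Θ * Θᵀ + Vperp * Vperpᵀ = 1 :=
    mul_transpose_add_mul_transpose_eq_one
      (finSumFinEquiv.trans (finCongr (Nat.add_sub_cancel' (by
        simpa using card_le_card_of_mul_eq_one hΘorth))))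
      hΘorth hVorth hΘV
  rw [hLsym, diagonal_const_mul_mul_diagonal_const, ← mul_inv, Real.mul_self_sqrt hd, hCbar,
    Matrix.mul_sub, Matrix.sub_mul, Matrix.mul_smul, Matrix.mul_one, Matrix.smul_mul, hkey,
    eq_sub_of_add_eq hcomplete]
  module

/-- Decomposition of the population symmetric Signed Laplacian in the SSBM:
`L_sym = I - (E D̄)^{-1/2} E[A] (E D̄)^{-1/2}` (with `E[D̄] = d̄ I`, `d̄ = p(n-1)`)
satisfies `L_sym = Θ C̄ Θᵀ + ᾱ V⊥ V⊥ᵀ`, i.e. the block-diagonal form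
`[Θ V⊥] diag(C̄, ᾱ I_{n-k}) [Θ V⊥]ᵀ`, where `ᾱ = 1 + (p/d̄)(1-2η)`,
`C̄ = ᾱ I_k - B̄`, and `V⊥` is any orthonormal basis of the orthogonal
complement of the column span of `Θ`. -/
theorem ssbm_population_laplacian_decomposition {n k : ℕ} (hn : 2 ≤ n)
    (c : Fin n → Fin k) (p η : ℝ)
    (hp : 0 < p) (hp1 : p ≤ 1) (hη : 0 ≤ η) (hη2 : η < 1/2)
    (nsize : Fin k → ℕ)
    (hnsize : ∀ i, nsize i = (Finset.univ.filter (fun j => c j = i)).card)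
    (EA Lsym : Matrix (Fin n) (Fin n) ℝ)
    (Θ : Matrix (Fin n) (Fin k) ℝ) (Bbar Cbar : Matrix (Fin k) (Fin k) ℝ)
    (Vperp : Matrix (Fin n) (Fin (n - k)) ℝ) (abar : ℝ)
    (hEA : ∀ j j', EA j j' = if j = j' then 0
        else if c j = c j' then p * (1 - 2*η) else -(p * (1 - 2*η)))
    (hΘ : ∀ j i, Θ j i = if c j = i then 1 / Real.sqrt (nsize i) else 0)
    (hΘorth : Θᵀ * Θ = 1)
    (hVorth : Vperpᵀ * Vperp = 1) (hΘV : Θᵀ * Vperp = 0)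
    (hB : ∀ i i', Bbar i i' =
        if i = i' then (nsize i : ℝ) * p * (1 - 2*η) / (p * ((n : ℝ) - 1))
        else -(Real.sqrt ((nsize i : ℝ) * (nsize i' : ℝ)) * p * (1 - 2*η)
          / (p * ((n : ℝ) - 1))))
    (habar : abar = 1 + (p / (p * ((n : ℝ) - 1))) * (1 - 2*η))
    (hCbar : Cbar = abar • (1 : Matrix (Fin k) (Fin k) ℝ) - Bbar)
    (hLsym : Lsym = 1 -
        Matrix.diagonal (fun _ : Fin n => (Real.sqrt (p * ((n : ℝ) - 1)))⁻¹) * EA *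
        Matrix.diagonal (fun _ : Fin n => (Real.sqrt (p * ((n : ℝ) - 1)))⁻¹)) :
    Lsym = Θ * Cbar * Θᵀ + abar • (Vperp * Vperpᵀ) :=
  ssbm_population_laplacian_decomposition_general hn c p η hp nsize hnsize EA Lsym Θ Bbar Cbar Vperp
    abar hEA hΘ hΘorth hVorth hΘV hB habar hCbar hLsym
end

section
/- Let C̄ = c·uuᵀ + diag(d_i) ∈ ℝ^{k×k} with c > 0, u entrywise positive, d_i > 0, and let R = [R_{k−1}, γ₁] be an orthogonal matrix of eigenvectors of C̄ where γ₁ is the top eigenvector and R_{k−1} ∈ ℝ^{k×(k−1)} collects the remaining eigenvectors. Then for all i ≠ i', ‖(R_{k−1})_{i*} − (R_{k−1})_{i'*}‖ ≥ 1, where (R_{k−1})_{i*} denotes the i-th row of R_{k−1}. -/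
/-!
Every off-diagonal entry of `C̄ = c·uuᵀ + diag(d)` is positive, so replacing a vector by its
entrywise absolute value never decreases the quadratic form and strictly increases it as soon as
two entries have opposite signs. Hence the Rayleigh maximizer `γ₁` has entries of one sign.
Orthonormality of the rows of `[R_{k−1}, γ₁]` gives
`‖r_i − r_{i'}‖² = 2 − γ₁ᵢ² − γ₁ᵢ'² + 2 γ₁ᵢ γ₁ᵢ'`, which is at least `1` because the cross term
is nonnegative and `γ₁ᵢ² + γ₁ᵢ'² ≤ ‖γ₁‖² = 1`.
-/

open Matrix Finset

theorem smul_vecMulVec_add_diagonal_apply_pos {n : Type*} [DecidableEq n] {c : ℝ}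
    {u : n → ℝ} (hc : 0 < c) (hu : ∀ i, 0 < u i) (d : n → ℝ) {i j : n} (hij : i ≠ j) :
    0 < (c • vecMulVec u u + diagonal d) i j := by
  simpa [vecMulVec_apply, hij] using mul_pos hc (mul_pos (hu i) (hu j))

section

variable {n : Type*} [Fintype n]

theorem dotProduct_mulVec_self_lt_abs {A : Matrix n n ℝ} (hA : ∀ a b, a ≠ b → 0 ≤ A a b)
    {x : n → ℝ} {i j : n} (hAij : 0 < A i j) (hx : x i * x j < 0) :
    x ⬝ᵥ A *ᵥ x < |x| ⬝ᵥ A *ᵥ |x| := by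
  have hterm : ∀ a b, x a * (A a b * x b) ≤ |x| a * (A a b * |x| b) := by
    intro a b
    rcases eq_or_ne a b with rfl | hab
    · refine le_of_eq ?_
      simp only [Pi.abs_apply]
      linear_combination (-A a a) * abs_mul_abs_self (x a)
    · calc x a * (A a b * x b) ≤ |x a * (A a b * x b)| := le_abs_self _
        _ = |x| a * (A a b * |x| b) := by simp [abs_mul, abs_of_nonneg (hA a b hab)]
  have hstrict : x i * (A i j * x j) < |x| i * (A i j * |x| j) := by
    have : x i * x j < |x i * x j| := by rw [abs_of_neg hx]; linarith
    simp only [Pi.abs_apply]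
    nlinarith [abs_mul (x i) (x j)]
  simp only [dotProduct, mulVec, mul_sum]
  exact sum_lt_sum (fun a _ => sum_le_sum fun b _ => hterm a b)
    ⟨i, mem_univ _, sum_lt_sum (fun b _ => hterm i b) ⟨j, mem_univ _, hstrict⟩⟩

theorem mul_nonneg_of_maximizes_dotProduct_mulVec {A : Matrix n n ℝ}
    (hA : ∀ a b, a ≠ b → 0 < A a b) {γ : n → ℝ} (hγ : ∑ a, γ a ^ 2 = 1)
    (hmax : ∀ v : n → ℝ, ∑ a, v a ^ 2 = 1 → v ⬝ᵥ A *ᵥ v ≤ γ ⬝ᵥ A *ᵥ γ) (i j : n) :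
    0 ≤ γ i * γ j := by
  by_contra! h
  have hij : i ≠ j := by
    rintro rfl
    nlinarith [mul_self_nonneg (γ i)]
  have habs : ∑ a, |γ| a ^ 2 = 1 := by simpa only [Pi.abs_apply, sq_abs] using hγ
  exact (hmax |γ| habs).not_gt
    (dotProduct_mulVec_self_lt_abs (fun a b hab => (hA a b hab).le) (hA i j hij) h)

theorem one_le_sum_sq_sub_of_orthonormal_rows {m : Type*} [Fintype m] [DecidableEq n]
    (R : Matrix n m ℝ) (γ : n → ℝ)
    (horth : ∀ i i', (∑ j, R i j * R i' j) + γ i * γ i' = if i = i' then (1 : ℝ) else 0)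
    (hγ : ∑ a, γ a ^ 2 = 1) {i i' : n} (hne : i ≠ i') (hsign : 0 ≤ γ i * γ i') :
    1 ≤ ∑ j, (R i j - R i' j) ^ 2 := by
  have hexpand : ∑ j, (R i j - R i' j) ^ 2 =
      (∑ j, R i j * R i j) + (∑ j, R i' j * R i' j) - 2 * ∑ j, R i j * R i' j := by
    rw [mul_sum, ← sum_add_distrib, ← sum_sub_distrib]
    exact sum_congr rfl fun j _ => by ring
  have hii := horth i i
  have hi'i' := horth i' i'
  have hii' := horth i i'
  simp only [if_pos, if_neg hne] at hii hi'i' hii'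
  have hpair : γ i ^ 2 + γ i' ^ 2 ≤ 1 := by
    rw [← hγ, ← sum_pair (f := fun a => γ a ^ 2) hne]
    exact sum_le_sum_of_subset_of_nonneg (subset_univ _) fun a _ _ => sq_nonneg _
  nlinarith

end

theorem row_separation_of_eigenvector_matrix_general {k : ℕ} (u d : Fin k → ℝ) (c : ℝ)
    (hu : ∀ i, 0 < u i) (hc : 0 < c)
    (C : Matrix (Fin k) (Fin k) ℝ)
    (hC : C = c • Matrix.vecMulVec u u + Matrix.diagonal d)
    (Rk : Matrix (Fin k) (Fin (k - 1)) ℝ) (γ₁ : Fin k → ℝ)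
    -- the square matrix `[R_{k-1}, γ₁]` is orthogonal (orthonormal rows):
    (hRorth : ∀ i i', (∑ j, Rk i j * Rk i' j) + γ₁ i * γ₁ i'
        = if i = i' then (1 : ℝ) else 0)
    -- `γ₁` is a top eigenvector, i.e. a unit-norm Rayleigh-quotient maximizer:
    (hγnorm : ∑ i, γ₁ i ^ 2 = 1)
    (hγmax : ∀ v : Fin k → ℝ, ∑ i, v i ^ 2 = 1 →
      v ⬝ᵥ C.mulVec v ≤ γ₁ ⬝ᵥ C.mulVec γ₁) :
    ∀ i i', i ≠ i' → 1 ≤ Real.sqrt (∑ j, (Rk i j - Rk i' j) ^ 2) := by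
  intro i i' hne
  have hCpos : ∀ a b, a ≠ b → 0 < C a b := fun a b hab =>
    hC ▸ smul_vecMulVec_add_diagonal_apply_pos hc hu d hab
  have hsign := mul_nonneg_of_maximizes_dotProduct_mulVec hCpos hγnorm hγmax i i'
  exact Real.one_le_sqrt.mpr
    (one_le_sum_sq_sub_of_orthonormal_rows Rk γ₁ hRorth hγnorm hne hsign)

/-- Row separation of the non-top eigenvectors: if `C̄ = c·uuᵀ + diag(d)` with
`c > 0`, `u, d` entrywise positive, `R = [R_{k-1}, γ₁]` is an orthogonal matrix
of eigenvectors of `C̄` with `γ₁` the top eigenvector (a unit-norm maximizer of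
the Rayleigh quotient) and `R_{k-1}` the remaining eigenvectors, then any two
distinct rows of `R_{k-1}` are at distance at least `1`. -/
theorem row_separation_of_eigenvector_matrix {k : ℕ} (u d : Fin k → ℝ) (c : ℝ)
    (hu : ∀ i, 0 < u i) (hd : ∀ i, 0 < d i) (hc : 0 < c)
    (C : Matrix (Fin k) (Fin k) ℝ)
    (hC : C = c • Matrix.vecMulVec u u + Matrix.diagonal d)
    (Rk : Matrix (Fin k) (Fin (k - 1)) ℝ) (γ₁ : Fin k → ℝ)
    -- the square matrix `[R_{k-1}, γ₁]` is orthogonal (orthonormal rows):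
    (hRorth : ∀ i i', (∑ j, Rk i j * Rk i' j) + γ₁ i * γ₁ i'
        = if i = i' then (1 : ℝ) else 0)
    -- the columns of `R_{k-1}` are eigenvectors of `C̄`:
    (hRkeig : ∀ j, ∃ μ : ℝ, C.mulVec (fun i => Rk i j) = μ • fun i => Rk i j)
    -- `γ₁` is a top eigenvector, i.e. a unit-norm Rayleigh-quotient maximizer:
    (hγnorm : ∑ i, γ₁ i ^ 2 = 1)
    (hγmax : ∀ v : Fin k → ℝ, ∑ i, v i ^ 2 = 1 →
      v ⬝ᵥ C.mulVec v ≤ γ₁ ⬝ᵥ C.mulVec γ₁) :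
    ∀ i i', i ≠ i' → 1 ≤ Real.sqrt (∑ j, (Rk i j - Rk i' j) ^ 2) :=
  row_separation_of_eigenvector_matrix_general u d c hu hc C hC Rk γ₁ hRorth hγnorm hγmax
end

section
/- Restriction lemma for regularized Signed Laplacians: Let B_γ be a symmetric n×n matrix with positive regularized degrees (D̄_γ)_{jj} = Σ_{j'} |(B_γ)_{jj'}| > 0, let L̄_γ = D̄_γ^{-1/2} B_γ D̄_γ^{-1/2}, and let 𝒞 ⊆ [n]×[n]. Suppose 0 < ε < 1 is such that for every row j, Σ_{j': (j,j')∈𝒞} |(B_γ)_{jj'}| ≤ ε · (D̄_γ)_{jj}. Then ‖(L̄_γ)_𝒞‖ ≤ √ε, where (L̄_γ)_𝒞 is obtained from L̄_γ by zeroing out all entries outside 𝒞. -/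
/-!
Schur test with the weights `√d`: by Cauchy–Schwarz,
`((L̄_𝒞 x)_j)² ≤ (∑_{j'} |L̄_𝒞 j j'| √d_{j'}) (∑_{j'} |L̄_𝒞 j j'| x_{j'}² / √d_{j'})`.
The first factor is the `𝒞`-part of row `j` of `|B|` divided by `√d_j`, hence at most `ε √d_j`;
summing over `j` and exchanging the sums, the column sums `∑_j |L̄_𝒞 j j'| √d_j` are at most
`d_{j'} / √d_{j'} = √d_{j'}` by symmetry of `B`. So `‖L̄_𝒞 x‖² ≤ ε ‖x‖²`.
-/

open Matrix

open Finset

namespace Matrix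

def restrictTo {m n : Type*} [DecidableEq m] [DecidableEq n] (C : Finset (m × n))
    (A : Matrix m n ℝ) : Matrix m n ℝ :=
  of fun i j => if (i, j) ∈ C then A i j else 0

theorem abs_restrictTo_diagonal_inv_mul_mul_diagonal_inv_apply {n : Type*} [Fintype n]
    [DecidableEq n] (B : Matrix n n ℝ) {s : n → ℝ} (hs : ∀ j, 0 < s j) (C : Finset (n × n))
    (j j' : n) :
    |restrictTo C (diagonal (fun j => (s j)⁻¹) * B * diagonal (fun j => (s j)⁻¹)) j j'| =
      (if (j, j') ∈ C then |B j j'| else 0) / (s j * s j') := by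
  by_cases h : (j, j') ∈ C
  · simp only [restrictTo, of_apply, h, if_true, diagonal_mul, mul_diagonal, abs_mul, abs_inv,
      abs_of_pos (hs j), abs_of_pos (hs j')]
    field_simp
  · simp [restrictTo, h]

theorem sq_mulVec_apply_le {m n : Type*} [Fintype n] (A : Matrix m n ℝ) {q : n → ℝ}
    (hq : ∀ j, 0 < q j) (x : n → ℝ) (i : m) :
    (A *ᵥ x) i ^ 2 ≤ (∑ j, |A i j| * q j) * ∑ j, |A i j| * x j ^ 2 / q j := by
  have hsum : |(A *ᵥ x) i| ≤ ∑ j, |A i j| * |x j| := by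
    simpa only [mulVec, dotProduct, abs_mul] using abs_sum_le_sum_abs (fun j => A i j * x j) univ
  calc (A *ᵥ x) i ^ 2 ≤ (∑ j, |A i j| * |x j|) ^ 2 := by
        rw [← sq_abs]
        exact pow_le_pow_left₀ (abs_nonneg _) hsum 2
    _ ≤ _ := by
        refine sum_sq_le_sum_mul_sum_of_sq_le_mul _ (fun j _ => by have := hq j; positivity)
          (fun j _ => by have := hq j; positivity) fun j _ => le_of_eq ?_
        field_simp [(hq j).ne']
        simp only [sq_abs]

theorem sum_sq_mulVec_le_of_schur {m n : Type*} [Fintype m] [Fintype n] (A : Matrix m n ℝ)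
    {p : m → ℝ} {q : n → ℝ} (hq : ∀ j, 0 < q j) {α β : ℝ} (hα : 0 ≤ α)
    (hrow : ∀ i, ∑ j, |A i j| * q j ≤ α * p i) (hcol : ∀ j, ∑ i, |A i j| * p i ≤ β * q j)
    (x : n → ℝ) :
    ∑ i, (A *ᵥ x) i ^ 2 ≤ α * β * ∑ j, x j ^ 2 := by
  calc ∑ i, (A *ᵥ x) i ^ 2 ≤ ∑ i, α * p i * ∑ j, |A i j| * x j ^ 2 / q j := by
        gcongr with i
        refine (sq_mulVec_apply_le A hq x i).trans ?_
        gcongr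
        · exact sum_nonneg fun j _ => by have := hq j; positivity
        · exact hrow i
    _ = α * ∑ j, x j ^ 2 / q j * ∑ i, |A i j| * p i := by
        simp only [mul_sum]
        rw [sum_comm]
        exact sum_congr rfl fun j _ => sum_congr rfl fun i _ => by ring
    _ ≤ α * ∑ j, x j ^ 2 / q j * (β * q j) := by
        gcongr with j
        · have := hq j; positivity
        · exact hcol j
    _ = α * β * ∑ j, x j ^ 2 := by
        simp only [mul_sum]
        exact sum_congr rfl fun j _ => by field_simp [(hq j).ne']

end Matrix

theorem specNorm_le_sqrt {n : ℕ} (A : Matrix (Fin n) (Fin n) ℝ) {c : ℝ} (hc : 0 ≤ c)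
    (h : ∀ x, ∑ i, (A *ᵥ x) i ^ 2 ≤ c * ∑ i, x i ^ 2) : specNorm A ≤ √c := by
  refine ContinuousLinearMap.opNorm_le_bound _ (Real.sqrt_nonneg c) fun x => ?_
  rw [← Real.sqrt_sq (norm_nonneg x), ← Real.sqrt_mul hc]
  refine Real.le_sqrt_of_sq_le ?_
  simpa only [EuclideanSpace.norm_sq_eq, ofLp_toEuclideanCLM, Real.norm_eq_abs, sq_abs]
    using h (WithLp.ofLp x)

theorem restriction_of_signed_laplacian_general {n : ℕ}
    (B : Matrix (Fin n) (Fin n) ℝ) (hB : B.IsSymm)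
    (d : Fin n → ℝ) (hd : ∀ j, d j = ∑ j', |B j j'|) (hdpos : ∀ j, 0 < d j)
    (C : Finset (Fin n × Fin n)) (ε : ℝ) (hε0 : 0 < ε)
    (hrow : ∀ j, (∑ j' ∈ Finset.univ.filter (fun j' => (j, j') ∈ C), |B j j'|)
        ≤ ε * d j)
    (L : Matrix (Fin n) (Fin n) ℝ)
    (hL : L = Matrix.diagonal (fun j => (Real.sqrt (d j))⁻¹) * B *
        Matrix.diagonal (fun j => (Real.sqrt (d j))⁻¹)) :
    specNorm (Matrix.of fun j j' => if (j, j') ∈ C then L j j' else 0)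
      ≤ Real.sqrt ε := by
  subst hL
  have hs : ∀ j, 0 < √(d j) := fun j => Real.sqrt_pos.2 (hdpos j)
  have hM := abs_restrictTo_diagonal_inv_mul_mul_diagonal_inv_apply B hs C
  change specNorm (restrictTo C _) ≤ _
  rw [← mul_one ε]
  refine specNorm_le_sqrt _ (by positivity)
    (sum_sq_mulVec_le_of_schur _ (p := fun j => √(d j)) hs hε0.le (fun j => ?_) (fun j' => ?_))
  · calc ∑ j', |restrictTo C _ j j'| * √(d j')
        = (∑ j' ∈ univ.filter (fun j' => (j, j') ∈ C), |B j j'|) / √(d j) := by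
          simp only [hM, sum_filter, sum_div]
          exact sum_congr rfl fun j' _ => by field_simp [(hs j').ne']
      _ ≤ ε * d j / √(d j) := by gcongr; exact hrow j
      _ = ε * √(d j) := by rw [mul_div_assoc, Real.div_sqrt]
  · calc ∑ j, |restrictTo C _ j j'| * √(d j) ≤ ∑ j, |B j' j| / √(d j') := by
          gcongr with j
          rw [hM, hB.apply j' j, mul_comm √(d j), ← div_div, div_mul_cancel₀ _ (hs j).ne']
          gcongr
          split_ifs <;> simp
      _ = 1 * √(d j') := by rw [← sum_div, ← hd, Real.div_sqrt, one_mul]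

/-- Restriction lemma for regularized Signed Laplacians: if `B` is symmetric with
positive absolute degrees `d j = ∑ j', |B j j'|`, `L̄ = D^{-1/2} B D^{-1/2}` and
`𝒞 ⊆ [n]×[n]` is such that each row's absolute degree within `𝒞` is at most
`ε` times its total degree (`0 < ε < 1`), then `‖L̄_𝒞‖ ≤ √ε`, where `L̄_𝒞`
zeroes all entries of `L̄` outside `𝒞`. -/
theorem restriction_of_signed_laplacian {n : ℕ}
    (B : Matrix (Fin n) (Fin n) ℝ) (hB : B.IsSymm)
    (d : Fin n → ℝ) (hd : ∀ j, d j = ∑ j', |B j j'|) (hdpos : ∀ j, 0 < d j)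
    (C : Finset (Fin n × Fin n)) (ε : ℝ) (hε0 : 0 < ε) (hε1 : ε < 1)
    (hrow : ∀ j, (∑ j' ∈ Finset.univ.filter (fun j' => (j, j') ∈ C), |B j j'|)
        ≤ ε * d j)
    (L : Matrix (Fin n) (Fin n) ℝ)
    (hL : L = Matrix.diagonal (fun j => (Real.sqrt (d j))⁻¹) * B *
        Matrix.diagonal (fun j => (Real.sqrt (d j))⁻¹)) :
    specNorm (Matrix.of fun j j' => if (j, j') ∈ C then L j j' else 0)
      ≤ Real.sqrt ε :=
  restriction_of_signed_laplacian_general B hB d hd hdpos C ε hε0 hrow L hL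
end

section
/- Let D̄ and D̄_γ = D̄ + γI be diagonal matrices with D̄_{jj} ≥ d_min > 0 and γ > 0, let A be a symmetric matrix and A_γ = A + (γ/n)J with J all-ones. If L_sym,γ := I − D̄_γ^{-1/2} A_γ D̄_γ^{-1/2} and L̄_sym := I − D̄^{-1/2} A D̄^{-1/2} denote the regularized and unregularized normalized Laplacians of a graph with nonnegative adjacency A (so that ‖I − L̄_sym‖ ≤ 1), then ‖D̄^{-1/2}AD̄^{-1/2} − D̄_γ^{-1/2}AD̄_γ^{-1/2}‖ ≤ 2√(γ/(d_min+γ)) and ‖D̄_γ^{-1/2}(A_γ−A)D̄_γ^{-1/2}‖ ≤ γ/(d_min+γ), hence ‖L_sym,γ − L̄_sym‖ ≤ 3√(γ/(d_min+γ)). -/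
/-!
Write `M = D̄^{-1/2} A D̄^{-1/2}` and `E = diag √(d/(d+γ))`, so that
`D̄_γ^{-1/2} A D̄_γ^{-1/2} = E M E` and `M - E M E = (1 - E) M + E M (1 - E)`. Since `‖M‖ ≤ 1`,
`‖E‖ ≤ 1` and `‖1 - E‖ ≤ √(γ/(d_min+γ))`, this gives the first bound. Both `‖M‖ ≤ 1` and the
bound on the rank-one term `D̄_γ^{-1/2}(γ/n)J D̄_γ^{-1/2}` are instances of the Schur test for
nonnegative matrices, with weights `√d` and `1` respectively. The Laplacians differ by the
difference of these two terms, and `t ≤ √t` for `t ∈ [0, 1]`.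
-/

open Matrix
open scoped Matrix.Norms.L2Operator

theorem specNorm_eq_l2_opNorm {n : ℕ} (A : Matrix (Fin n) (Fin n) ℝ) : specNorm A = ‖A‖ := rfl

/-- The Schur test. -/
theorem Matrix.l2_opNorm_le_of_weighted_sum_le {ι : Type*} [Fintype ι] [DecidableEq ι]
    {B : Matrix ι ι ℝ} (hB : ∀ i j, 0 ≤ B i j) {p : ι → ℝ} (hp : ∀ i, 0 < p i) {c : ℝ}
    (hc : 0 ≤ c) (hrow : ∀ i, ∑ j, B i j * p j ≤ c * p i)
    (hcol : ∀ j, ∑ i, B i j * p i ≤ c * p j) : ‖B‖ ≤ c := by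
  refine (toEuclideanCLM (𝕜 := ℝ) B).opNorm_le_bound hc fun x => ?_
  refine (sq_le_sq₀ (norm_nonneg _) (by positivity)).mp ?_
  have hweighted : ∀ i, 0 ≤ ∑ j, B i j * x j ^ 2 / p j := fun i =>
    Finset.sum_nonneg fun j _ => div_nonneg (mul_nonneg (hB i j) (sq_nonneg _)) (hp j).le
  -- Cauchy–Schwarz with weights `B i j * p j`
  have hrow_sq : ∀ i, (∑ j, B i j * x j) ^ 2 ≤ c * p i * ∑ j, B i j * x j ^ 2 / p j := by
    intro i
    calc (∑ j, B i j * x j) ^ 2 ≤ (∑ j, B i j * p j) * ∑ j, B i j * x j ^ 2 / p j :=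
          Finset.sum_sq_le_sum_mul_sum_of_sq_le_mul _
            (fun j _ => mul_nonneg (hB i j) (hp j).le)
            (fun j _ => div_nonneg (mul_nonneg (hB i j) (sq_nonneg _)) (hp j).le)
            fun j _ => le_of_eq (by field_simp [(hp j).ne'])
      _ ≤ c * p i * ∑ j, B i j * x j ^ 2 / p j := mul_le_mul_of_nonneg_right (hrow i) (hweighted i)
  calc ‖toEuclideanCLM (𝕜 := ℝ) B x‖ ^ 2 = ∑ i, (∑ j, B i j * x j) ^ 2 := by
        simp [EuclideanSpace.norm_sq_eq, mulVec, dotProduct]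
    _ ≤ ∑ i, c * p i * ∑ j, B i j * x j ^ 2 / p j := Finset.sum_le_sum fun i _ => hrow_sq i
    _ = c * ∑ j, (∑ i, B i j * p i) * (x j ^ 2 / p j) := by
        simp only [Finset.mul_sum, Finset.sum_mul]
        rw [Finset.sum_comm]
        refine Finset.sum_congr rfl fun j _ => Finset.sum_congr rfl fun i _ => by ring
    _ ≤ c * ∑ j, c * p j * (x j ^ 2 / p j) := by
        gcongr with j
        exact div_nonneg (sq_nonneg _) (hp j).le
        exact hcol j
    _ = (c * ‖x‖) ^ 2 := by
        rw [mul_pow, EuclideanSpace.norm_sq_eq, Finset.mul_sum, Finset.mul_sum]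
        refine Finset.sum_congr rfl fun j _ => ?_
        field_simp [(hp j).ne']
        simp

theorem Matrix.l2_opNorm_le_card_mul_of_le {ι : Type*} [Fintype ι] [DecidableEq ι]
    {B : Matrix ι ι ℝ} (hB : ∀ i j, 0 ≤ B i j) {b : ℝ} (hb : ∀ i j, B i j ≤ b) :
    ‖B‖ ≤ Fintype.card ι * b := by
  have hrow : ∀ i, ∑ j, B i j * 1 ≤ Fintype.card ι * b * 1 := fun i => by
    simpa using Finset.sum_le_sum (s := Finset.univ) fun j _ => hb i j
  have hcol : ∀ j, ∑ i, B i j * 1 ≤ Fintype.card ι * b * 1 := fun j => by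
    simpa using Finset.sum_le_sum (s := Finset.univ) fun i _ => hb i j
  have hc : 0 ≤ Fintype.card ι * b := by
    rcases isEmpty_or_nonempty ι with hι | ⟨⟨i⟩⟩
    · simp
    · exact mul_nonneg (Nat.cast_nonneg _) ((hB i i).trans (hb i i))
  exact l2_opNorm_le_of_weighted_sum_le hB (fun _ => one_pos) hc hrow hcol

theorem Matrix.l2_opNorm_diagonal_le {ι : Type*} [Fintype ι] [DecidableEq ι] {v : ι → ℝ} {c : ℝ}
    (hc : 0 ≤ c) (hv : ∀ i, |v i| ≤ c) : ‖diagonal v‖ ≤ c := by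
  rw [l2_opNorm_diagonal, pi_norm_le_iff_of_nonneg hc]
  exact hv

theorem norm_sub_mul_mul_self_le {R : Type*} [NormedRing R] {M E : R} {s : ℝ} (hM : ‖M‖ ≤ 1)
    (hE : ‖E‖ ≤ 1) (hs : ‖1 - E‖ ≤ s) : ‖M - E * M * E‖ ≤ 2 * s := by
  have hs0 : 0 ≤ s := (norm_nonneg _).trans hs
  have hEM : ‖E * M‖ ≤ 1 := (norm_mul_le _ _).trans (mul_le_one₀ hE (norm_nonneg _) hM)
  calc ‖M - E * M * E‖ = ‖(1 - E) * M + E * M * (1 - E)‖ := by noncomm_ring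
    _ ≤ ‖1 - E‖ * ‖M‖ + ‖E * M‖ * ‖1 - E‖ :=
        (norm_add_le _ _).trans (add_le_add (norm_mul_le _ _) (norm_mul_le _ _))
    _ ≤ s * 1 + 1 * s := by gcongr
    _ = 2 * s := by ring

theorem one_sub_sqrt_le_sqrt_of_add_eq_one {a b : ℝ} (ha : 0 ≤ a) (hb : 0 ≤ b) (hab : a + b = 1) :
    1 - √a ≤ √b := by
  refine Real.le_sqrt_of_sq_le ?_
  have : a ≤ √a := Real.le_sqrt_self_iff.2 (by linarith)
  nlinarith [Real.sq_sqrt ha]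

theorem Matrix.l2_opNorm_diagonal_inv_sqrt_mul_mul_le_one {ι : Type*} [Fintype ι] [DecidableEq ι]
    {A : Matrix ι ι ℝ} (hA : A.IsSymm) (hApos : ∀ i j, 0 ≤ A i j) {d : ι → ℝ}
    (hd : ∀ i, d i = ∑ j, A i j) (hdpos : ∀ i, 0 < d i) :
    ‖diagonal (fun i => (√(d i))⁻¹) * A * diagonal (fun i => (√(d i))⁻¹)‖ ≤ 1 := by
  set B := diagonal (fun i => (√(d i))⁻¹) * A * diagonal (fun i => (√(d i))⁻¹)
  have hB : ∀ i j, B i j = (√(d i))⁻¹ * A i j * (√(d j))⁻¹ := fun i j => by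
    simp [B, mul_diagonal, diagonal_mul]
  have hBsymm : ∀ i j, B i j = B j i := fun i j => by rw [hB, hB, hA.apply]; ring
  -- `B` fixes `√d`, which is therefore the Schur weight
  have hrow : ∀ i, ∑ j, B i j * √(d j) = 1 * √(d i) := fun i => by
    calc ∑ j, B i j * √(d j) = (√(d i))⁻¹ * ∑ j, A i j := by
          rw [Finset.mul_sum]
          refine Finset.sum_congr rfl fun j _ => ?_
          rw [hB]
          field_simp [(Real.sqrt_pos.2 (hdpos j)).ne']
      _ = 1 * √(d i) := by rw [← hd, inv_mul_eq_div, Real.div_sqrt, one_mul]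
  refine l2_opNorm_le_of_weighted_sum_le (fun i j => ?_) (fun i => Real.sqrt_pos.2 (hdpos i))
    zero_le_one (fun i => (hrow i).le) fun j => ?_
  · rw [hB]; have := hApos i j; positivity
  · simpa only [hBsymm _ j] using (hrow j).le

theorem Matrix.l2_opNorm_normalized_sub_regularized_le {ι : Type*} [Fintype ι] [DecidableEq ι]
    {A : Matrix ι ι ℝ} (hA : A.IsSymm) (hApos : ∀ i j, 0 ≤ A i j) {d : ι → ℝ}
    (hd : ∀ i, d i = ∑ j, A i j) {dmin γ : ℝ} (hdmin : 0 < dmin) (hγ : 0 ≤ γ)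
    (hdge : ∀ i, dmin ≤ d i) :
    ‖diagonal (fun i => (√(d i))⁻¹) * A * diagonal (fun i => (√(d i))⁻¹) -
      diagonal (fun i => (√(d i + γ))⁻¹) * A * diagonal (fun i => (√(d i + γ))⁻¹)‖ ≤
      2 * √(γ / (dmin + γ)) := by
  have hdpos : ∀ i, 0 < d i := fun i => hdmin.trans_le (hdge i)
  set e : ι → ℝ := fun i => √(d i / (d i + γ))
  have he : ∀ i, e i * (√(d i))⁻¹ = (√(d i + γ))⁻¹ := fun i => by
    have := hdpos i
    simp only [e, Real.sqrt_div this.le]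
    field_simp
  have he_le_one : ∀ i, e i ≤ 1 := fun i =>
    Real.sqrt_le_one.2 (div_le_one_of_le₀ (by linarith) (by linarith [hdpos i]))
  have hconj : diagonal e * (diagonal (fun i => (√(d i))⁻¹) * A *
      diagonal (fun i => (√(d i))⁻¹)) * diagonal e =
      diagonal (fun i => (√(d i + γ))⁻¹) * A * diagonal (fun i => (√(d i + γ))⁻¹) := by
    ext i j
    simp only [mul_diagonal, diagonal_mul, ← he]
    ring
  rw [← hconj]
  refine norm_sub_mul_mul_self_le
    (l2_opNorm_diagonal_inv_sqrt_mul_mul_le_one hA hApos hd hdpos)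
    (l2_opNorm_diagonal_le zero_le_one fun i => ?_) ?_
  · rw [abs_of_nonneg (Real.sqrt_nonneg _)]; exact he_le_one i
  · rw [← diagonal_one, diagonal_sub]
    refine l2_opNorm_diagonal_le (Real.sqrt_nonneg _) fun i => ?_
    have hdi := hdpos i
    have hdγ : 0 < d i + γ := by linarith
    rw [abs_of_nonneg (sub_nonneg.2 (he_le_one i))]
    calc 1 - e i ≤ √(γ / (d i + γ)) :=
          one_sub_sqrt_le_sqrt_of_add_eq_one (by positivity) (by positivity)
            (by field_simp)
      _ ≤ √(γ / (dmin + γ)) := by gcongr; exacts [hdge i]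

theorem Matrix.l2_opNorm_regularization_le {n : ℕ} {d : Fin n → ℝ} {dmin γ : ℝ}
    (hdmin : 0 < dmin) (hγ : 0 ≤ γ) (hdge : ∀ i, dmin ≤ d i) :
    ‖diagonal (fun i => (√(d i + γ))⁻¹) * ((γ / n) • of fun _ _ => (1 : ℝ)) *
      diagonal (fun i => (√(d i + γ))⁻¹)‖ ≤ γ / (dmin + γ) := by
  calc _ ≤ n * (γ / n / (dmin + γ)) := by
        refine (l2_opNorm_le_card_mul_of_le (fun i j => ?_) fun i j => ?_).trans_eq
          (by rw [Fintype.card_fin])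
        · simp only [mul_diagonal, diagonal_mul, smul_apply, of_apply, smul_eq_mul]
          positivity
        · simp only [mul_diagonal, diagonal_mul, smul_apply, of_apply, smul_eq_mul, mul_one]
          calc (√(d i + γ))⁻¹ * (γ / n) * (√(d j + γ))⁻¹
              ≤ (√(dmin + γ))⁻¹ * (γ / n) * (√(dmin + γ))⁻¹ := by
                gcongr
                exacts [hdge i, hdge j]
            _ = γ / n / (dmin + γ) := by
                rw [mul_comm, ← mul_assoc, ← mul_inv, Real.mul_self_sqrt (by positivity)]
                ring
    _ ≤ γ / (dmin + γ) := by
        rcases Nat.eq_zero_or_pos n with rfl | hn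
        · simp; positivity
        · exact (by field_simp : (n : ℝ) * (γ / n / (dmin + γ)) = γ / (dmin + γ)).le

/-- Comparison of regularized and unregularized normalized Laplacians of a
nonnegative adjacency matrix `A` with degrees `d j ≥ d_min > 0`:
with `A_γ = A + (γ/n) J` and `D̄_γ = D̄ + γ I`,
`‖D̄^{-1/2}AD̄^{-1/2} - D̄_γ^{-1/2}AD̄_γ^{-1/2}‖ ≤ 2√(γ/(d_min+γ))`,
`‖D̄_γ^{-1/2}(A_γ-A)D̄_γ^{-1/2}‖ ≤ γ/(d_min+γ)`, and hence
`‖L_{sym,γ} - L̄_sym‖ ≤ 3√(γ/(d_min+γ))`. -/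
theorem regularized_laplacian_comparison {n : ℕ}
    (A : Matrix (Fin n) (Fin n) ℝ) (hA : A.IsSymm)
    (hApos : ∀ j j', 0 ≤ A j j')
    (dmin γ : ℝ) (hdmin : 0 < dmin) (hγ : 0 < γ)
    (d : Fin n → ℝ) (hd : ∀ j, d j = ∑ j', A j j') (hdge : ∀ j, dmin ≤ d j) :
    let Dh : Matrix (Fin n) (Fin n) ℝ :=
      Matrix.diagonal fun j => (Real.sqrt (d j))⁻¹
    let Dγh : Matrix (Fin n) (Fin n) ℝ :=
      Matrix.diagonal fun j => (Real.sqrt (d j + γ))⁻¹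
    let Aγ : Matrix (Fin n) (Fin n) ℝ :=
      A + (γ / n) • (Matrix.of fun _ _ => (1 : ℝ))
    let Lsym : Matrix (Fin n) (Fin n) ℝ := 1 - Dh * A * Dh
    let Lsymγ : Matrix (Fin n) (Fin n) ℝ := 1 - Dγh * Aγ * Dγh
    specNorm (Dh * A * Dh - Dγh * A * Dγh) ≤ 2 * Real.sqrt (γ / (dmin + γ)) ∧
    specNorm (Dγh * (Aγ - A) * Dγh) ≤ γ / (dmin + γ) ∧
    specNorm (Lsymγ - Lsym) ≤ 3 * Real.sqrt (γ / (dmin + γ)) := by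
  intro Dh Dγh Aγ Lsym Lsymγ
  simp only [specNorm_eq_l2_opNorm]
  have hnormalized : ‖Dh * A * Dh - Dγh * A * Dγh‖ ≤ 2 * √(γ / (dmin + γ)) :=
    l2_opNorm_normalized_sub_regularized_le hA hApos hd hdmin hγ.le hdge
  have hregularization : ‖Dγh * (Aγ - A) * Dγh‖ ≤ γ / (dmin + γ) := by
    rw [add_sub_cancel_left]
    exact l2_opNorm_regularization_le hdmin hγ.le hdge
  have hle_sqrt : γ / (dmin + γ) ≤ √(γ / (dmin + γ)) :=
    Real.le_sqrt_self_iff.2 ((div_le_one (by linarith)).2 (by linarith))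
  refine ⟨hnormalized, hregularization, ?_⟩
  calc ‖Lsymγ - Lsym‖ = ‖(Dh * A * Dh - Dγh * A * Dγh) - Dγh * (Aγ - A) * Dγh‖ := by
        congr 1; simp only [Lsym, Lsymγ]; noncomm_ring
    _ ≤ 2 * √(γ / (dmin + γ)) + √(γ / (dmin + γ)) :=
        (norm_sub_le _ _).trans (add_le_add hnormalized (hregularization.trans hle_sqrt))
    _ = 3 * √(γ / (dmin + γ)) := by ring
end
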